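/- arXiv:1901.03777 — 3 statements merged into one kernel-verified Lean document; each statement's English description precedes it below -/
import Mathlib

section
/- Let Γ ⊆ H^N be c-monotone with Γ + Δ^⊥ = H^N. Then Γ is maximally c-monotone: if u ∈ H^N is such that Γ ∪ {u} is c-monotone, then u ∈ Γ. -/
/-!
Testing `c`-monotonicity of `u` against a point `x` with `u - x = d ∈ Δ^⊥` on a singleton
`K = {i}` gives `0 ≤ ⟪d i, ∑_{j ≠ i} d j⟫ = -‖d i‖²`, so `d = 0`. Since `Γ + Δ^⊥` is everything,
every `u` compatible with `Γ` has such a partner `x ∈ Γ`, hence `u = x ∈ Γ`.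
-/

open scoped RealInnerProductSpace BigOperators

noncomputable section

variable {H : Type*} [NormedAddCommGroup H] [InnerProductSpace ℝ H] [CompleteSpace H]

/-- `Γ ⊆ H^N` is `c`-monotone. -/
def CMono {N : ℕ} (Γ : Set (Fin N → H)) : Prop :=
  ∀ u ∈ Γ, ∀ v ∈ Γ, ∀ K : Finset (Fin N), K.Nonempty → K ≠ Finset.univ →
    0 ≤ ⟪∑ i ∈ K, (u i - v i), ∑ i ∈ Kᶜ, (u i - v i)⟫

theorem Finset.sum_compl_singleton_eq_neg {ι G : Type*} [Fintype ι] [DecidableEq ι]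
    [AddCommGroup G] {d : ι → G} (hd : ∑ j, d j = 0) (i : ι) :
    ∑ j ∈ {i}ᶜ, d j = -d i := by
  rw [eq_neg_iff_add_eq_zero, ← hd, ← Finset.sum_compl_add_sum {i}, Finset.sum_singleton]

theorem CMono.eq_of_sum_sub_eq_zero {E : Type*} [NormedAddCommGroup E] [InnerProductSpace ℝ E]
    {N : ℕ} (hN : 2 ≤ N) {Γ : Set (Fin N → E)} (hΓ : CMono Γ) {u x : Fin N → E}
    (hu : u ∈ Γ) (hx : x ∈ Γ) (hsum : ∑ i, (u i - x i) = 0) : u = x := by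
  have : Nontrivial (Fin N) := Fin.nontrivial_iff_two_le.mpr hN
  funext i
  have hi := hΓ u hu x hx {i} (Finset.singleton_nonempty i) (Finset.singleton_ne_univ i)
  rw [Finset.sum_singleton, Finset.sum_compl_singleton_eq_neg hsum, inner_neg_right,
    neg_nonneg, real_inner_self_nonpos] at hi
  exact sub_eq_zero.mp hi

theorem max_c_monotone_of_gamma_add_diagPerp_eq_univ_general {N : ℕ} (hN : 2 ≤ N)
    (Γ : Set (Fin N → H))
    (hsurj : ∀ a : Fin N → H, ∃ x ∈ Γ, ∃ d : Fin N → H, (∑ i, d i) = 0 ∧ x + d = a)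
    (u : Fin N → H) (hu : CMono (Γ ∪ {u})) : u ∈ Γ := by
  obtain ⟨x, hx, d, hd, rfl⟩ := hsurj u
  have hsum : ∑ i, ((x + d) i - x i) = 0 := by simpa using hd
  rwa [hu.eq_of_sum_sub_eq_zero hN (Or.inr rfl) (Or.inl hx) hsum]

/-- If `Γ` is `c`-monotone and `Γ + Δ^⊥ = H^N`, then `Γ` is maximally `c`-monotone. -/
theorem max_c_monotone_of_gamma_add_diagPerp_eq_univ {N : ℕ} (hN : 2 ≤ N)
    (Γ : Set (Fin N → H)) (hΓ : CMono Γ)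
    (hsurj : ∀ a : Fin N → H, ∃ x ∈ Γ, ∃ d : Fin N → H, (∑ i, d i) = 0 ∧ x + d = a)
    (u : Fin N → H) (hu : CMono (Γ ∪ {u})) : u ∈ Γ :=
  max_c_monotone_of_gamma_add_diagPerp_eq_univ_general hN Γ hsurj u hu
end
end

section
/- Let f₁,...,f_N : H → ℝ ∪ {+∞} be proper lsc convex with Σ_{i<j}⟨x_i,x_j⟩ ≤ Σ_i f_i(x_i) for all x, and let Γ be the set where equality holds. If s ∈ H satisfies Σ_{i=1}^N e_{f_i^*}(s) = ½‖s‖², then (prox_{f₁}(s), ..., prox_{f_N}(s)) ∈ Γ and Σ_i prox_{f_i}(s) = s. -/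
/-!
Since `∑ᵢ e_{fᵢ*}(s)` is finite, so is every `e_{fᵢ*}(s)`, and weak duality
`q(s) ≤ e_f(s) + e_{f*}(s)` makes every `e_{fᵢ}(s)` finite. The objective `fᵢ + q(s - ·)` is
`1`-strongly convex, so its minimizing sequences are Cauchy, and by lower semicontinuity their limit
is `prox_{fᵢ}(s)`. At `pᵢ = prox_{fᵢ}(s)`, `s - pᵢ` is a subgradient of `fᵢ`, which gives
`e_{fᵢ*}(s) ≤ ⟪s, pᵢ⟫ - q(pᵢ) - fᵢ(pᵢ)`. Summing, and using `q(∑ pᵢ) = ∑ q(pᵢ) + c(p)` together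
with `c(p) ≤ ∑ fᵢ(pᵢ)`, yields `0 ≤ q(s - ∑ pᵢ) ≤ c(p) - ∑ fᵢ(pᵢ) ≤ 0`.
-/

open scoped RealInnerProductSpace BigOperators

noncomputable section

variable {H : Type*} [NormedAddCommGroup H] [InnerProductSpace ℝ H] [CompleteSpace H]

/-- The multi-marginal cost `c(x₁,...,x_N) = ∑_{i<j} ⟪x_i, x_j⟫`. -/
def cost {N : ℕ} (x : Fin N → H) : ℝ :=
  ∑ i : Fin N, ∑ j : Fin N, if i < j then ⟪x i, x j⟫ else 0

/-- `q(x) = ½‖x‖²`. -/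
def q (x : H) : ℝ := (1 / 2) * ‖x‖ ^ 2

/-- Convexity for extended-real-valued functions. -/
def EConvex (f : H → EReal) : Prop :=
  ∀ x y : H, ∀ a b : ℝ, 0 ≤ a → 0 ≤ b → a + b = 1 →
    f (a • x + b • y) ≤ (a : EReal) * f x + (b : EReal) * f y

/-- The Fenchel conjugate `f*(u) = sup_x (⟪u,x⟫ - f(x))`. -/
def econj (f : H → EReal) (u : H) : EReal :=
  ⨆ x : H, ((⟪u, x⟫ : ℝ) : EReal) - f x

/-- The Moreau envelope `e_f(s) = inf_x (f(x) + q(s - x))`. -/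
def env (f : H → EReal) (s : H) : EReal :=
  ⨅ x : H, f x + ((q (s - x) : ℝ) : EReal)

open Filter Topology

theorem EReal.coe_finsetSum {ι : Type*} (s : Finset ι) (g : ι → ℝ) :
    ((∑ i ∈ s, g i : ℝ) : EReal) = ∑ i ∈ s, (g i : EReal) :=
  map_sum (⟨⟨Real.toEReal, EReal.coe_zero⟩, EReal.coe_add⟩ : ℝ →+ EReal) g s

theorem EReal.exists_coe_of_sum_eq_coe {ι : Type*} [Fintype ι] [DecidableEq ι] {a : ι → EReal}
    {c : ℝ} (h : ∑ i, a i = c) : ∃ r : ι → ℝ, (∀ i, a i = r i) ∧ ∑ i, r i = c := by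
  have hbot : ∀ i, a i ≠ ⊥ := fun j hj => by
    rw [← Finset.add_sum_erase _ _ (Finset.mem_univ j), hj, EReal.bot_add] at h
    exact EReal.bot_ne_coe c h
  have htop : ∀ i, a i ≠ ⊤ := fun j hj => by
    have hrest : ∑ i ∈ Finset.univ.erase j, a i ≠ ⊥ :=
      Finset.sum_induction _ (· ≠ ⊥) (fun x y hx hy => EReal.add_ne_bot_iff.2 ⟨hx, hy⟩)
        EReal.zero_ne_bot fun i _ => hbot i
    rw [← Finset.add_sum_erase _ _ (Finset.mem_univ j), hj, EReal.top_add_of_ne_bot hrest] at h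
    exact EReal.top_ne_coe c h
  refine ⟨fun i => (a i).toReal, fun i => (EReal.coe_toReal (htop i) (hbot i)).symm, ?_⟩
  rw [← EReal.coe_eq_coe_iff, EReal.coe_finsetSum, ← h]
  exact Finset.sum_congr rfl fun i _ => EReal.coe_toReal (htop i) (hbot i)

theorem EReal.exists_coe_of_add_coe_le_coe {a : EReal} (ha : a ≠ ⊥) {c d : ℝ}
    (h : a + c ≤ d) : ∃ r : ℝ, a = r ∧ r + c ≤ d := by
  have htop : a ≠ ⊤ := by
    rintro rfl
    rw [EReal.top_add_coe] at h
    exact EReal.coe_ne_top d (top_le_iff.1 h)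
  refine ⟨a.toReal, (EReal.coe_toReal htop ha).symm, ?_⟩
  rw [← EReal.coe_le_coe_iff, EReal.coe_add, EReal.coe_toReal htop ha]
  exact h

theorem LowerSemicontinuous.le_of_tendsto {α γ ι : Type*} [TopologicalSpace α] [LinearOrder γ]
    [TopologicalSpace γ] [OrderClosedTopology γ] [DenselyOrdered γ] {φ : α → γ}
    (hφ : LowerSemicontinuous φ) {l : Filter ι} [l.NeBot] {x : ι → α} {p : α}
    (hx : Tendsto x l (𝓝 p)) {u : ι → γ} {m : γ} (hu : Tendsto u l (𝓝 m))
    (h : ∀ n, φ (x n) ≤ u n) : φ p ≤ m :=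
  le_of_forall_lt_imp_le_of_dense fun c hc =>
    ge_of_tendsto hu ((hx.eventually (hφ p c hc)).mono fun n hn => (hn.trans_le (h n)).le)

section

variable {E : Type*} [NormedAddCommGroup E]

theorem q_nonneg (x : E) : 0 ≤ q x := by unfold q; positivity

theorem q_eq_zero_iff {x : E} : q x = 0 ↔ x = 0 := by simp [q]

def IsProxPoint (f : E → EReal) (s p : E) : Prop :=
  ∀ x, f p + ((q (s - p) : ℝ) : EReal) ≤ f x + ((q (s - x) : ℝ) : EReal)

theorem IsProxPoint.exists_eq_coe {f : E → EReal} {s p : E} (hp : IsProxPoint f s p)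
    (hbot : ∀ x, f x ≠ ⊥) (hfin : ∃ x, f x ≠ ⊤) : ∃ b : ℝ, f p = b := by
  obtain ⟨x, hx⟩ := hfin
  have hpx := hp x
  rw [← EReal.coe_toReal hx (hbot x), ← EReal.coe_add] at hpx
  obtain ⟨b, hb, -⟩ := EReal.exists_coe_of_add_coe_le_coe (hbot p) hpx
  exact ⟨b, hb⟩

variable [InnerProductSpace ℝ E]

theorem q_sub (s x : E) : q (s - x) = q s - ⟪s, x⟫ + q x := by
  simp only [q, norm_sub_sq_real]; ring

theorem q_smul (t : ℝ) (x : E) : q (t • x) = t ^ 2 * q x := by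
  simp only [q, norm_smul, mul_pow, Real.norm_eq_abs, sq_abs]; ring

theorem q_midpoint (x y : E) :
    q ((1 / 2 : ℝ) • x + (1 / 2 : ℝ) • y) = q x / 2 + q y / 2 - ‖x - y‖ ^ 2 / 8 := by
  have hpar := parallelogram_law_with_norm ℝ x y
  rw [← smul_add, q_smul]
  simp only [q]
  linarith

theorem q_sum {N : ℕ} (p : Fin N → E) : q (∑ i, p i) = ∑ i, q (p i) + cost p := by
  have hsplit : ∀ i j, ⟪p i, p j⟫ = (if i < j then ⟪p i, p j⟫ else 0)
      + (if j < i then ⟪p j, p i⟫ else 0) + if i = j then ⟪p i, p i⟫ else 0 := by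
    intro i j
    rcases lt_trichotomy i j with h | rfl | h
    · simp [h, h.not_gt, h.ne]
    · simp
    · simp [h, h.not_gt, h.ne', real_inner_comm]
  have hsq : ‖∑ i, p i‖ ^ 2 = ∑ i, ∑ j, ((if i < j then ⟪p i, p j⟫ else 0)
      + (if j < i then ⟪p j, p i⟫ else 0) + if i = j then ⟪p i, p i⟫ else 0) := by
    rw [← real_inner_self_eq_norm_sq, sum_inner]
    refine Finset.sum_congr rfl fun i _ => ?_
    rw [inner_sum]
    exact Finset.sum_congr rfl fun j _ => hsplit i j
  simp only [Finset.sum_add_distrib, Finset.sum_ite_eq, Finset.mem_univ, if_true] at hsq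
  rw [Finset.sum_comm (f := fun i j => if j < i then ⟪p j, p i⟫ else 0)] at hsq
  simp only [q, hsq, cost, real_inner_self_eq_norm_sq, ← Finset.mul_sum]
  ring

theorem inner_sub_le_econj (f : E → EReal) (u x : E) :
    ((⟪u, x⟫ : ℝ) : EReal) - f x ≤ econj f u :=
  le_iSup (fun y => ((⟪u, y⟫ : ℝ) : EReal) - f y) x

theorem inner_sub_q_sub_le_env_econj {f : E → EReal} {x : E} {c : ℝ} (hx : f x = c) (s : E) :
    ((⟪s, x⟫ - q x - c : ℝ) : EReal) ≤ env (econj f) s := by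
  refine le_iInf fun u => ?_
  have hyoung : ⟪s, x⟫ - q x - c ≤ ⟪u, x⟫ - c + q (s - u) := by
    have := q_nonneg (s - u - x)
    rw [q_sub (s - u) x, inner_sub_left] at this
    linarith
  calc ((⟪s, x⟫ - q x - c : ℝ) : EReal)
      ≤ ((⟪u, x⟫ - c : ℝ) : EReal) + ((q (s - u) : ℝ) : EReal) := by exact_mod_cast hyoung
    _ ≤ econj f u + ((q (s - u) : ℝ) : EReal) := by
      gcongr
      rw [EReal.coe_sub, ← hx]
      exact inner_sub_le_econj f u x

theorem q_sub_le_of_env_econj_eq {f : E → EReal} (hbot : ∀ x, f x ≠ ⊥) {s : E} {r : ℝ}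
    (hr : env (econj f) s = r) (x : E) :
    ((q s - r : ℝ) : EReal) ≤ f x + ((q (s - x) : ℝ) : EReal) := by
  rcases eq_or_ne (f x) ⊤ with htop | htop
  · simp [htop]
  have hx : f x = (f x).toReal := (EReal.coe_toReal htop (hbot x)).symm
  have hdual := inner_sub_q_sub_le_env_econj hx s
  rw [hr, EReal.coe_le_coe_iff] at hdual
  rw [hx, ← EReal.coe_add, EReal.coe_le_coe_iff, q_sub]
  linarith

theorem exists_env_eq_coe {f : E → EReal} (hbot : ∀ x, f x ≠ ⊥) (hfin : ∃ x, f x ≠ ⊤) {s : E}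
    {r : ℝ} (hr : env (econj f) s = r) : ∃ m : ℝ, env f s = m := by
  obtain ⟨x, hx⟩ := hfin
  have hle : env f s ≤ ((((f x).toReal + q (s - x) : ℝ)) : EReal) := by
    rw [EReal.coe_add, EReal.coe_toReal hx (hbot x)]
    exact iInf_le _ x
  have hge : ((q s - r : ℝ) : EReal) ≤ env f s := le_iInf (q_sub_le_of_env_econj_eq hbot hr)
  exact ⟨(env f s).toReal, (EReal.coe_toReal (ne_top_of_le_ne_top (EReal.coe_ne_top _) hle)
    (ne_bot_of_le_ne_bot (EReal.coe_ne_bot _) hge)).symm⟩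

theorem norm_sub_sq_le_of_le_env {f : E → EReal} (hbot : ∀ x, f x ≠ ⊥) (hconv : EConvex f)
    {s : E} {m : ℝ} (hm : ∀ z, (m : EReal) ≤ f z + ((q (s - z) : ℝ) : EReal)) {x y : E}
    {ε δ : ℝ} (hx : f x + ((q (s - x) : ℝ) : EReal) ≤ ((m + ε : ℝ) : EReal))
    (hy : f y + ((q (s - y) : ℝ) : EReal) ≤ ((m + δ : ℝ) : EReal)) :
    ‖x - y‖ ^ 2 ≤ 4 * (ε + δ) := by
  obtain ⟨a, hfx, ha⟩ := EReal.exists_coe_of_add_coe_le_coe (hbot x) hx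
  obtain ⟨b, hfy, hb⟩ := EReal.exists_coe_of_add_coe_le_coe (hbot y) hy
  set z := (1 / 2 : ℝ) • x + (1 / 2 : ℝ) • y
  have hfz : f z ≤ ((a / 2 + b / 2 : ℝ) : EReal) := by
    have := hconv x y (1 / 2) (1 / 2) (by norm_num) (by norm_num) (by norm_num)
    rw [hfx, hfy] at this
    refine this.trans (le_of_eq ?_)
    norm_cast
    ring
  have hqz : q (s - z) = q (s - x) / 2 + q (s - y) / 2 - ‖x - y‖ ^ 2 / 8 := by
    rw [show s - z = (1 / 2 : ℝ) • (s - x) + (1 / 2 : ℝ) • (s - y) by module, q_midpoint,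
      sub_sub_sub_cancel_left, norm_sub_rev]
  have hmz : m ≤ a / 2 + b / 2 + q (s - z) := by
    have := (hm z).trans (add_le_add_left hfz _)
    exact_mod_cast this
  linarith

theorem exists_isProxPoint [CompleteSpace E] {f : E → EReal} (hbot : ∀ x, f x ≠ ⊥)
    (hlsc : LowerSemicontinuous f) (hconv : EConvex f) {s : E} {m : ℝ} (hm : env f s = m) :
    ∃ p, IsProxPoint f s p := by
  have hlow : ∀ z, (m : EReal) ≤ f z + ((q (s - z) : ℝ) : EReal) := fun z => hm ▸ iInf_le _ z
  have hseq : ∀ n : ℕ,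
      ∃ x, f x + ((q (s - x) : ℝ) : EReal) ≤ ((m + 1 / (n + 1) : ℝ) : EReal) := by
    intro n
    have : env f s < ((m + 1 / (n + 1) : ℝ) : EReal) := by
      rw [hm, EReal.coe_lt_coe_iff]
      linarith [Nat.one_div_pos_of_nat (α := ℝ) (n := n)]
    obtain ⟨x, hx⟩ := iInf_lt_iff.1 this
    exact ⟨x, hx.le⟩
  choose x hx using hseq
  have hcauchy : CauchySeq x := by
    refine cauchySeq_of_le_tendsto_0' (fun n : ℕ => √(8 * (1 / (n + 1)))) (fun n k hnk => ?_) ?_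
    · have hsq := norm_sub_sq_le_of_le_env hbot hconv hlow (hx n) (hx k)
      have hnk' : 1 / ((k : ℝ) + 1) ≤ 1 / (n + 1) := by gcongr
      rw [dist_eq_norm]
      exact Real.le_sqrt_of_sq_le (by linarith)
    · have := (tendsto_one_div_add_atTop_nhds_zero_nat.const_mul 8).sqrt
      rwa [mul_zero, Real.sqrt_zero] at this
  obtain ⟨p, hp⟩ := cauchySeq_tendsto_of_complete hcauchy
  have hobj : LowerSemicontinuous fun z => f z + ((q (s - z) : ℝ) : EReal) :=
    hlsc.add' (EReal.continuous_coe_iff.2 (by unfold q; fun_prop)).lowerSemicontinuous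
      fun z => EReal.continuousAt_add (Or.inr (EReal.coe_ne_bot _)) (Or.inr (EReal.coe_ne_top _))
  have hlim : Tendsto (fun n : ℕ => ((m + 1 / (n + 1) : ℝ) : EReal)) atTop (𝓝 (m : EReal)) :=
    EReal.tendsto_coe.2 (by simpa using tendsto_one_div_add_atTop_nhds_zero_nat.const_add m)
  exact ⟨p, fun y => (hobj.le_of_tendsto hp hlim hx).trans (hlow y)⟩

theorem IsProxPoint.add_inner_le {f : E → EReal} (hbot : ∀ x, f x ≠ ⊥) (hconv : EConvex f)
    {s p : E} (hp : IsProxPoint f s p) {b : ℝ} (hb : f p = b) (x : E) :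
    ((b + ⟪s - p, x - p⟫ : ℝ) : EReal) ≤ f x := by
  rcases eq_or_ne (f x) ⊤ with htop | htop
  · simp [htop]
  set v := (f x).toReal
  have hv : f x = v := (EReal.coe_toReal htop (hbot x)).symm
  have hsegment : ∀ t ∈ Set.Ioc (0 : ℝ) 1, ⟪s - p, x - p⟫ ≤ v - b + t * q (x - p) := by
    rintro t ⟨ht0, ht1⟩
    have hft : f (t • x + (1 - t) • p) ≤ ((t * v + (1 - t) * b : ℝ) : EReal) := by
      have := hconv x p t (1 - t) ht0.le (by linarith) (by ring)
      rwa [hv, hb, ← EReal.coe_mul, ← EReal.coe_mul, ← EReal.coe_add] at this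
    have hq : q (s - (t • x + (1 - t) • p))
        = q (s - p) - t * ⟪s - p, x - p⟫ + t ^ 2 * q (x - p) := by
      rw [show s - (t • x + (1 - t) • p) = (s - p) - t • (x - p) by module, q_sub,
        real_inner_smul_right, q_smul]
    have hmin : b + q (s - p) ≤ t * v + (1 - t) * b + q (s - (t • x + (1 - t) • p)) := by
      have := (hp (t • x + (1 - t) • p)).trans (add_le_add_left hft _)
      rw [hb] at this
      exact_mod_cast this
    rw [hq] at hmin
    refine le_of_mul_le_mul_left ?_ ht0
    linarith
  have hlim : Tendsto (fun t : ℝ => v - b + t * q (x - p)) (𝓝[>] 0) (𝓝 (v - b)) := by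
    have : Continuous fun t : ℝ => v - b + t * q (x - p) := by fun_prop
    simpa using (this.tendsto 0).mono_left nhdsWithin_le_nhds
  have hlimit := ge_of_tendsto hlim (eventually_of_mem (Ioc_mem_nhdsGT one_pos) hsegment)
  rw [hv, EReal.coe_le_coe_iff]
  linarith

theorem IsProxPoint.env_econj_le {f : E → EReal} (hbot : ∀ x, f x ≠ ⊥) (hconv : EConvex f)
    {s p : E} (hp : IsProxPoint f s p) {b : ℝ} (hb : f p = b) :
    env (econj f) s ≤ ((⟪s, p⟫ - q p - b : ℝ) : EReal) := by
  have hconj : econj f (s - p) ≤ ((⟪s - p, p⟫ - b : ℝ) : EReal) := iSup_le fun x => by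
    calc ((⟪s - p, x⟫ : ℝ) : EReal) - f x
        ≤ ((⟪s - p, x⟫ : ℝ) : EReal) - ((b + ⟪s - p, x - p⟫ : ℝ) : EReal) :=
          EReal.sub_le_sub le_rfl (hp.add_inner_le hbot hconv hb x)
      _ = ((⟪s - p, p⟫ - b : ℝ) : EReal) := by
          rw [← EReal.coe_sub, inner_sub_right]
          ring_nf
  calc env (econj f) s ≤ econj f (s - p) + ((q (s - (s - p)) : ℝ) : EReal) := iInf_le _ (s - p)
    _ ≤ ((⟪s - p, p⟫ - b : ℝ) : EReal) + ((q p : ℝ) : EReal) := by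
        rw [sub_sub_cancel]
        gcongr
    _ = ((⟪s, p⟫ - q p - b : ℝ) : EReal) := by
        rw [← EReal.coe_add, inner_sub_left, real_inner_self_eq_norm_sq]
        simp only [q]
        ring_nf

theorem cost_eq_and_sum_eq_of_le {N : ℕ} {s : E} {p : Fin N → E} {b r : Fin N → ℝ}
    (hrsum : ∑ i, r i = q s) (hr : ∀ i, r i ≤ ⟪s, p i⟫ - q (p i) - b i)
    (hcost : cost p ≤ ∑ i, b i) : cost p = ∑ i, b i ∧ ∑ i, p i = s := by
  have hsum := Finset.sum_le_sum fun i (_ : i ∈ Finset.univ) => hr i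
  simp only [Finset.sum_sub_distrib, ← inner_sum] at hsum
  have hgap : q (s - ∑ i, p i) ≤ cost p - ∑ i, b i := by
    rw [q_sub, q_sum]
    linarith
  have hgap_nonneg := q_nonneg (s - ∑ i, p i)
  exact ⟨by linarith, (sub_eq_zero.1 (q_eq_zero_iff.1 (by linarith))).symm⟩

end

theorem envelope_equality_gives_splitting_point_general {N : ℕ}
    (f : Fin N → H → EReal)
    (hproper : ∀ i, (∃ x, f i x ≠ ⊤) ∧ ∀ x, f i x ≠ ⊥)
    (hlsc : ∀ i, LowerSemicontinuous (f i))
    (hconv : ∀ i, EConvex (f i))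
    (hineq : ∀ x : Fin N → H, ((cost x : ℝ) : EReal) ≤ ∑ i, f i (x i))
    (s : H) (heq : ∑ i, env (econj (f i)) s = ((q s : ℝ) : EReal)) :
    (∃ p : Fin N → H, ∀ i, ∀ x : H,
        f i (p i) + ((q (s - p i) : ℝ) : EReal) ≤ f i x + ((q (s - x) : ℝ) : EReal)) ∧
    (∀ p : Fin N → H,
      (∀ i, ∀ x : H,
        f i (p i) + ((q (s - p i) : ℝ) : EReal) ≤ f i x + ((q (s - x) : ℝ) : EReal)) →
      ((cost p : ℝ) : EReal) = ∑ i, f i (p i) ∧ ∑ i, p i = s) := by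
  have hbot i := (hproper i).2
  obtain ⟨r, hr, hrsum⟩ := EReal.exists_coe_of_sum_eq_coe heq
  have hprox : ∀ i, ∃ p, IsProxPoint (f i) s p := fun i => by
    obtain ⟨m, hm⟩ := exists_env_eq_coe (hbot i) (hproper i).1 (hr i)
    exact exists_isProxPoint (hbot i) (hlsc i) (hconv i) hm
  choose P hP using hprox
  refine ⟨⟨P, hP⟩, fun p (hp : ∀ i, IsProxPoint (f i) s (p i)) => ?_⟩
  choose b hb using fun i => (hp i).exists_eq_coe (hbot i) (hproper i).1
  have hfsum : ∑ i, f i (p i) = ((∑ i, b i : ℝ) : EReal) := by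
    rw [EReal.coe_finsetSum]
    exact Finset.sum_congr rfl fun i _ => hb i
  have hr_le i : r i ≤ ⟪s, p i⟫ - q (p i) - b i := by
    rw [← EReal.coe_le_coe_iff, ← hr i]
    exact (hp i).env_econj_le (hbot i) (hconv i) (hb i)
  have hcost : cost p ≤ ∑ i, b i := by
    rw [← EReal.coe_le_coe_iff, ← hfsum]
    exact hineq p
  obtain ⟨hcost_eq, hsum_eq⟩ := cost_eq_and_sum_eq_of_le hrsum hr_le hcost
  exact ⟨by rw [hfsum, hcost_eq], hsum_eq⟩

/-- If equality `∑ᵢ e_{fᵢ*}(s) = q(s)` holds at `s`, then the proximal points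
`pᵢ = prox_{fᵢ}(s)` exist, `(p₁,...,p_N)` lies in the `c`-splitting set generated by
`(f₁,...,f_N)`, and `∑ᵢ pᵢ = s`. -/
theorem envelope_equality_gives_splitting_point {N : ℕ} (hN : 2 ≤ N)
    (f : Fin N → H → EReal)
    (hproper : ∀ i, (∃ x, f i x ≠ ⊤) ∧ ∀ x, f i x ≠ ⊥)
    (hlsc : ∀ i, LowerSemicontinuous (f i))
    (hconv : ∀ i, EConvex (f i))
    (hineq : ∀ x : Fin N → H, ((cost x : ℝ) : EReal) ≤ ∑ i, f i (x i))
    (s : H) (heq : ∑ i, env (econj (f i)) s = ((q s : ℝ) : EReal)) :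
    (∃ p : Fin N → H, ∀ i, ∀ x : H,
        f i (p i) + ((q (s - p i) : ℝ) : EReal) ≤ f i x + ((q (s - x) : ℝ) : EReal)) ∧
    (∀ p : Fin N → H,
      (∀ i, ∀ x : H,
        f i (p i) + ((q (s - p i) : ℝ) : EReal) ≤ f i x + ((q (s - x) : ℝ) : EReal)) →
      ((cost p : ℝ) : EReal) = ∑ i, f i (p i) ∧ ∑ i, p i = s) :=
  envelope_equality_gives_splitting_point_general f hproper hlsc hconv hineq s heq
end
end

section
/- Let α₁,...,α_N : ℝ → ℝ be continuous, strictly increasing, surjective with α_i(0) = 0, and define f_i(x) = ∫₀^x Σ_{k≠i} α_k(α_i^{-1}(t)) dt. Then Σ_{1≤i<j≤N} x_i x_j ≤ Σ_{i=1}^N f_i(x_i) for all (x₁,...,x_N) ∈ ℝ^N, with equality if and only if there exists t ∈ ℝ with x_i = α_i(t) for all i. -/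
/-! Each pair `i < j` contributes one instance of Young's inequality for the increasing bijection
`α_j ∘ α_i⁻¹`, whose inverse is `α_i ∘ α_j⁻¹`: `x_i x_j` is at most the `j`-th summand of `f_i(x_i)`
plus the `i`-th summand of `f_j(x_j)`, with equality iff `α_i⁻¹(x_i) = α_j⁻¹(x_j)`. Summing over
pairs gives the inequality, and equality in the sum forces all `α_i⁻¹(x_i)` to coincide.

Young's identity `∫₀^a e + ∫₀^{e a} e⁻¹ = a e(a)` is proved without differentiating `e`: the
defect `D` satisfies `|D v - D u| ≤ |v - u| |e v - e u|`, so `D' = 0` by continuity of `e`. -/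

open intervalIntegral Finset Filter Topology Asymptotics

theorem Monotone.integral_mem_Icc {f : ℝ → ℝ} (hf : Monotone f) {u v : ℝ} (huv : u ≤ v) :
    ∫ t in u..v, f t ∈ Set.Icc ((v - u) * f u) ((v - u) * f v) := by
  constructor
  · simpa using integral_mono_on huv intervalIntegrable_const
      (hf.intervalIntegrable (μ := MeasureTheory.volume)) fun t ht => hf ht.1
  · simpa using integral_mono_on huv (hf.intervalIntegrable (μ := MeasureTheory.volume))
      intervalIntegrable_const fun t ht => hf ht.2

theorem StrictMono.integral_sub_apply_pos {f : ℝ → ℝ} (hf : StrictMono f) {a c : ℝ}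
    (hac : a ≠ c) : 0 < ∫ t in c..a, (f t - f c) := by
  have hint : ∀ u v, IntervalIntegrable (fun t => f t - f c) MeasureTheory.volume u v :=
    fun u v => (hf.monotone.intervalIntegrable (a := u) (b := v)).sub intervalIntegrable_const
  rcases hac.lt_or_gt with h | h
  · rw [integral_symm, ← integral_neg]
    exact intervalIntegral_pos_of_pos_on (hint a c).neg
      (fun t ht => neg_pos.2 (sub_neg.2 (hf ht.2))) h
  · exact intervalIntegral_pos_of_pos_on (hint c a) (fun t ht => sub_pos.2 (hf ht.1)) h

theorem hasDerivAt_zero_of_abs_sub_le {f g : ℝ → ℝ} {u : ℝ} (hg : ContinuousAt g u)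
    (h : ∀ v, |f v - f u| ≤ |v - u| * |g v - g u|) : HasDerivAt f 0 u := by
  rw [hasDerivAt_iff_isLittleO]
  have hsmall : (fun v => (v - u) * (g v - g u)) =o[𝓝 u] fun v => (v - u) * 1 :=
    (isBigO_refl _ _).mul_isLittleO
      ((isLittleO_one_iff ℝ).2 (tendsto_sub_nhds_zero_iff.2 hg))
  refine (IsBigO.of_bound 1 (Eventually.of_forall fun v => ?_)).trans_isLittleO
    (by simpa using hsmall)
  simpa [abs_mul] using h v

namespace OrderIso

variable (e : ℝ ≃o ℝ)

noncomputable def youngDefect (a : ℝ) : ℝ :=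
  (∫ t in (0 : ℝ)..a, e t) + (∫ t in (0 : ℝ)..e a, e.symm t) - a * e a

theorem abs_youngDefect_sub_le_of_le {u v : ℝ} (huv : u ≤ v) :
    |e.youngDefect v - e.youngDefect u| ≤ (v - u) * (e v - e u) := by
  have h₁ := e.monotone.integral_mem_Icc huv
  have h₂ := e.symm.monotone.integral_mem_Icc (e.monotone huv)
  simp only [symm_apply_apply] at h₂
  have s₁ : (∫ t in (0 : ℝ)..v, e t) - ∫ t in (0 : ℝ)..u, e t = ∫ t in u..v, e t :=
    integral_interval_sub_left e.monotone.intervalIntegrable e.monotone.intervalIntegrable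
  have s₂ : (∫ t in (0 : ℝ)..e v, e.symm t) - ∫ t in (0 : ℝ)..e u, e.symm t
      = ∫ t in e u..e v, e.symm t :=
    integral_interval_sub_left e.symm.monotone.intervalIntegrable
      e.symm.monotone.intervalIntegrable
  rw [youngDefect, youngDefect, abs_le]
  constructor <;> nlinarith [h₁.1, h₁.2, h₂.1, h₂.2]

theorem abs_youngDefect_sub_le (u v : ℝ) :
    |e.youngDefect v - e.youngDefect u| ≤ |v - u| * |e v - e u| := by
  rcases le_total u v with huv | hvu
  · rw [← abs_mul, abs_of_nonneg (mul_nonneg (sub_nonneg.2 huv) (sub_nonneg.2 (e.monotone huv)))]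
    exact e.abs_youngDefect_sub_le_of_le huv
  · rw [abs_sub_comm, abs_sub_comm v, abs_sub_comm (e v), ← abs_mul,
      abs_of_nonneg (mul_nonneg (sub_nonneg.2 hvu) (sub_nonneg.2 (e.monotone hvu)))]
    exact e.abs_youngDefect_sub_le_of_le hvu

theorem youngDefect_eq_zero (h0 : e 0 = 0) (a : ℝ) : e.youngDefect a = 0 := by
  have hderiv : ∀ u, HasDerivAt e.youngDefect 0 u := fun u =>
    hasDerivAt_zero_of_abs_sub_le e.continuous.continuousAt (e.abs_youngDefect_sub_le u)
  rw [is_const_of_deriv_eq_zero (fun u => (hderiv u).differentiableAt)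
    (fun u => (hderiv u).deriv) a 0]
  simp [youngDefect, h0]

theorem integral_add_integral_symm_apply (h0 : e 0 = 0) (a : ℝ) :
    (∫ t in (0 : ℝ)..a, e t) + (∫ t in (0 : ℝ)..e a, e.symm t) = a * e a :=
  sub_eq_zero.1 (e.youngDefect_eq_zero h0 a)

theorem integral_add_integral_symm_sub_mul (h0 : e 0 = 0) (a b : ℝ) :
    (∫ t in (0 : ℝ)..a, e t) + (∫ t in (0 : ℝ)..b, e.symm t) - a * b
      = ∫ t in e.symm b..a, (e t - b) := by
  have hid := e.integral_add_integral_symm_apply h0 (e.symm b)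
  rw [apply_symm_apply] at hid
  have hsub : (∫ t in (0 : ℝ)..a, e t) - ∫ t in (0 : ℝ)..e.symm b, e t
      = ∫ t in e.symm b..a, e t :=
    integral_interval_sub_left e.monotone.intervalIntegrable e.monotone.intervalIntegrable
  rw [integral_sub e.monotone.intervalIntegrable intervalIntegrable_const, integral_const,
    smul_eq_mul]
  linarith

theorem mul_lt_integral_add_integral_symm (h0 : e 0 = 0) {a b : ℝ} (hb : b ≠ e a) :
    a * b < (∫ t in (0 : ℝ)..a, e t) + ∫ t in (0 : ℝ)..b, e.symm t := by
  have hpos := e.strictMono.integral_sub_apply_pos (c := e.symm b) (a := a)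
    (fun h => hb (by rw [h, apply_symm_apply]))
  rw [apply_symm_apply, ← e.integral_add_integral_symm_sub_mul h0] at hpos
  linarith

theorem mul_le_integral_add_integral_symm (h0 : e 0 = 0) (a b : ℝ) :
    a * b ≤ (∫ t in (0 : ℝ)..a, e t) + ∫ t in (0 : ℝ)..b, e.symm t := by
  rcases eq_or_ne b (e a) with rfl | hb
  · exact (e.integral_add_integral_symm_apply h0 a).ge
  · exact (e.mul_lt_integral_add_integral_symm h0 hb).le

theorem mul_eq_integral_add_integral_symm_iff (h0 : e 0 = 0) (a b : ℝ) :
    a * b = (∫ t in (0 : ℝ)..a, e t) + (∫ t in (0 : ℝ)..b, e.symm t) ↔ b = e a := by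
  refine ⟨fun h => ?_, ?_⟩
  · by_contra hb
    exact (e.mul_lt_integral_add_integral_symm h0 hb).ne h
  · rintro rfl
    exact (e.integral_add_integral_symm_apply h0 a).symm

theorem mul_le_integral_add_integral_symm_trans {e₁ e₂ : ℝ ≃o ℝ} (h₁ : e₁ 0 = 0)
    (h₂ : e₂ 0 = 0) (a b : ℝ) :
    a * b ≤ (∫ t in (0 : ℝ)..a, e₂ (e₁.symm t)) + ∫ t in (0 : ℝ)..b, e₁ (e₂.symm t) := by
  simpa using (e₁.symm.trans e₂).mul_le_integral_add_integral_symm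
    (by rw [trans_apply, e₁.symm_apply_eq.2 h₁.symm, h₂]) a b

theorem mul_eq_integral_add_integral_symm_trans_iff {e₁ e₂ : ℝ ≃o ℝ} (h₁ : e₁ 0 = 0)
    (h₂ : e₂ 0 = 0) (a b : ℝ) :
    a * b = (∫ t in (0 : ℝ)..a, e₂ (e₁.symm t)) + (∫ t in (0 : ℝ)..b, e₁ (e₂.symm t)) ↔
      e₁.symm a = e₂.symm b := by
  simpa [eq_comm (a := e₁.symm a), ← e₂.symm_apply_eq] using
    (e₁.symm.trans e₂).mul_eq_integral_add_integral_symm_iff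
      (by rw [trans_apply, e₁.symm_apply_eq.2 h₁.symm, h₂]) a b

end OrderIso

section Pairs

variable {ι : Type*} [LinearOrder ι]

theorem exists_forall_eq_iff_forall_lt_eq {β : Type*} [Nonempty β] (f : ι → β) :
    (∃ b, ∀ i, f i = b) ↔ ∀ i j, i < j → f i = f j := by
  refine ⟨fun ⟨b, hb⟩ i j _ => by rw [hb, hb], fun h => ?_⟩
  rcases isEmpty_or_nonempty ι with hι | ⟨⟨i₀⟩⟩
  · exact ⟨Classical.arbitrary β, isEmptyElim⟩
  · refine ⟨f i₀, fun i => ?_⟩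
    rcases lt_trichotomy i i₀ with h' | rfl | h'
    · exact h i i₀ h'
    · rfl
    · exact (h i₀ i h').symm

variable (e : ι → ℝ ≃o ℝ) (x : ι → ℝ)

theorem ite_lt_mul_le_ite_lt_integral (h0 : ∀ i, e i 0 = 0) (i j : ι) :
    (if i < j then x i * x j else 0) ≤ if i < j then
      (∫ t in (0 : ℝ)..x i, e j ((e i).symm t)) + ∫ t in (0 : ℝ)..x j, e i ((e j).symm t)
      else 0 := by
  split_ifs
  · exact OrderIso.mul_le_integral_add_integral_symm_trans (h0 i) (h0 j) _ _
  · rfl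

variable [Fintype ι] [DecidableEq ι]

theorem Finset.sum_sum_erase_eq_sum_sum_lt {M : Type*} [AddCommMonoid M] (A : ι → ι → M) :
    ∑ i, ∑ k ∈ univ.erase i, A i k = ∑ i, ∑ j, if i < j then A i j + A j i else 0 := by
  have hsplit : ∀ i, ∑ k ∈ univ.erase i, A i k
      = (∑ k, if i < k then A i k else 0) + ∑ k, if k < i then A i k else 0 := by
    intro i
    rw [← sum_add_distrib, ← filter_ne', sum_filter]
    refine sum_congr rfl fun k _ => ?_
    rcases lt_trichotomy i k with h | rfl | h
    · simp [h, h.ne', h.not_gt]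
    · simp
    · simp [h, h.ne, h.not_gt]
  simp only [hsplit, sum_add_distrib]
  rw [sum_comm (f := fun i k => if k < i then A i k else 0), ← sum_add_distrib]
  refine sum_congr rfl fun i _ => ?_
  rw [← sum_add_distrib]
  refine sum_congr rfl fun j _ => ?_
  split_ifs <;> simp

theorem sum_integral_sum_erase_eq :
    ∑ i, ∫ t in (0 : ℝ)..x i, ∑ k ∈ univ.erase i, e k ((e i).symm t)
      = ∑ i, ∑ j, if i < j then (∫ t in (0 : ℝ)..x i, e j ((e i).symm t))
          + ∫ t in (0 : ℝ)..x j, e i ((e j).symm t) else 0 := by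
  rw [← sum_sum_erase_eq_sum_sum_lt]
  refine sum_congr rfl fun i _ => integral_finsetSum fun k _ => ?_
  exact ((e k).monotone.comp (e i).symm.monotone).intervalIntegrable

theorem sum_lt_mul_le_sum_integral (h0 : ∀ i, e i 0 = 0) :
    (∑ i, ∑ j, if i < j then x i * x j else 0)
      ≤ ∑ i, ∫ t in (0 : ℝ)..x i, ∑ k ∈ univ.erase i, e k ((e i).symm t) := by
  rw [sum_integral_sum_erase_eq]
  exact sum_le_sum fun i _ => sum_le_sum fun j _ => ite_lt_mul_le_ite_lt_integral e x h0 i j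

theorem sum_lt_mul_eq_sum_integral_iff (h0 : ∀ i, e i 0 = 0) :
    (∑ i, ∑ j, if i < j then x i * x j else 0)
        = ∑ i, ∫ t in (0 : ℝ)..x i, ∑ k ∈ univ.erase i, e k ((e i).symm t) ↔
      ∃ t, ∀ i, x i = e i t := by
  have hle := ite_lt_mul_le_ite_lt_integral e x h0
  rw [sum_integral_sum_erase_eq, sum_eq_sum_iff_of_le fun i _ => sum_le_sum fun j _ => hle i j]
  calc (∀ i ∈ univ, _) ↔ ∀ i j, i < j → (e i).symm (x i) = (e j).symm (x j) := by
        refine forall_congr' fun i => ?_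
        simp only [mem_univ, true_implies]
        rw [sum_eq_sum_iff_of_le fun j _ => hle i j]
        refine forall_congr' fun j => ?_
        by_cases hij : i < j
        · simp only [hij, if_true, mem_univ, true_implies,
            OrderIso.mul_eq_integral_add_integral_symm_trans_iff (h0 i) (h0 j)]
        · simp [hij]
    _ ↔ ∃ t, ∀ i, (e i).symm (x i) = t := (exists_forall_eq_iff_forall_lt_eq _).symm
    _ ↔ ∃ t, ∀ i, x i = e i t := by simp only [OrderIso.symm_apply_eq]

end Pairs

theorem curve_splitting_general {N : ℕ} (α : Fin N → ℝ → ℝ)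
    (hmono : ∀ i, StrictMono (α i))
    (hsurj : ∀ i, Function.Surjective (α i))
    (h0 : ∀ i, α i 0 = 0) :
    ∀ x : Fin N → ℝ,
      ((∑ i : Fin N, ∑ j : Fin N, if i < j then x i * x j else 0)
        ≤ ∑ i : Fin N,
            ∫ t in (0:ℝ)..(x i),
              ∑ k ∈ Finset.univ.erase i, α k (Function.invFun (α i) t)) ∧
      (((∑ i : Fin N, ∑ j : Fin N, if i < j then x i * x j else 0)
          = ∑ i : Fin N,
              ∫ t in (0:ℝ)..(x i),
                ∑ k ∈ Finset.univ.erase i, α k (Function.invFun (α i) t))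
        ↔ ∃ t : ℝ, ∀ i, x i = α i t) := by
  intro x
  obtain ⟨e, rfl⟩ : ∃ e : Fin N → ℝ ≃o ℝ, (fun i => ⇑(e i)) = α :=
    ⟨fun i => (hmono i).orderIsoOfSurjective (α i) (hsurj i), by simp⟩
  have hinv : ∀ i, Function.invFun (e i) = (e i).symm := fun i =>
    Function.invFun_eq_of_injective_of_rightInverse (e i).injective (e i).apply_symm_apply
  simp only [hinv]
  exact ⟨sum_lt_mul_le_sum_integral e x h0, sum_lt_mul_eq_sum_integral_iff e x h0⟩

/-- One-dimensional nonlinear `c`-splitting along a monotone curve: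
`∑_{i<j} x_i x_j ≤ ∑_i ∫₀^{x_i} ∑_{k≠i} α_k(α_i⁻¹(t)) dt`, with equality iff
`x_i = α_i(t)` for some common `t`. -/
theorem curve_splitting {N : ℕ} (hN : 2 ≤ N) (α : Fin N → ℝ → ℝ)
    (hcont : ∀ i, Continuous (α i))
    (hmono : ∀ i, StrictMono (α i))
    (hsurj : ∀ i, Function.Surjective (α i))
    (h0 : ∀ i, α i 0 = 0) :
    ∀ x : Fin N → ℝ,
      ((∑ i : Fin N, ∑ j : Fin N, if i < j then x i * x j else 0)
        ≤ ∑ i : Fin N,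
            ∫ t in (0:ℝ)..(x i),
              ∑ k ∈ Finset.univ.erase i, α k (Function.invFun (α i) t)) ∧
      (((∑ i : Fin N, ∑ j : Fin N, if i < j then x i * x j else 0)
          = ∑ i : Fin N,
              ∫ t in (0:ℝ)..(x i),
                ∑ k ∈ Finset.univ.erase i, α k (Function.invFun (α i) t))
        ↔ ∃ t : ℝ, ∀ i, x i = α i t) :=
  curve_splitting_general α hmono hsurj h0
end
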